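/- arXiv:1806.00320 — 2 statements merged into one kernel-verified Lean document; each statement's English description precedes it below -/
import Mathlib

section
/- For all subsets I, J ⊆ Fin n of equal cardinality, all a ∈ ℝ^D, ω ∈ (ℝ_{>0})^n and d ∈ (ℝ_{>0})^n: det Σ_Ω(a', ω')[I,J] = (∏_{i ∈ I} d_i) · (∏_{j ∈ J} d_j) · det Σ_Ω(a, ω)[I,J], where a'_{(i,j)} = d_i⁻¹ · a_{(i,j)} · d_j for each (i,j) ∈ D and ω'_m = d_m² · ω_m for each m ∈ Fin n. -/
open Matrix

noncomputable section

/-- The real matrix of edge weights `a`. -/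
def edgeMatrixR (n : ℕ) (D : Finset (Fin n × Fin n)) (a : {e // e ∈ D} → ℝ) :
    Matrix (Fin n) (Fin n) ℝ :=
  Matrix.of fun i j => if h : (i, j) ∈ D then a ⟨(i, j), h⟩ else 0

/-- `Σ_Ω(a, ω) = (I - A(a))⁻ᵀ · diag(ω) · (I - A(a))⁻¹`. -/
def sigmaOm (n : ℕ) (D : Finset (Fin n × Fin n)) (a : {e // e ∈ D} → ℝ) (ω : Fin n → ℝ) :
    Matrix (Fin n) (Fin n) ℝ :=
  ((1 - edgeMatrixR n D a)ᵀ)⁻¹ * Matrix.diagonal ω * (1 - edgeMatrixR n D a)⁻¹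

/-- `det M[I,J]`, rows and columns in increasing order. -/
def subdet {α : Type*} [CommRing α] {n : ℕ} (M : Matrix (Fin n) (Fin n) α)
    (I J : Finset (Fin n)) : α :=
  if h : I.card = J.card then
    (M.submatrix (fun p : Fin I.card => ((I.orderIsoOfFin rfl) p : Fin n))
      (fun p : Fin I.card => ((J.orderIsoOfFin h.symm) p : Fin n))).det
  else 0

/-!
With `Δ = diagonal d`, the rescaled edge matrix is `Δ⁻¹ A Δ`, so `I - A'` is conjugate to `I - A`
and `Σ_Ω(a', ω') = Δ Σ_Ω(a, ω) Δ`; a minor of `Δ M Δ` on rows `I` and columns `J` picks up the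
factors `d_i` for `i ∈ I` and `d_j` for `j ∈ J`.
-/

namespace Matrix

variable {ι K : Type*} [Fintype ι] [DecidableEq ι] [Field K] {d : ι → K}

theorem diagonal_inv_mul_diagonal (hd : ∀ i, d i ≠ 0) : diagonal d⁻¹ * diagonal d = 1 := by
  rw [diagonal_mul_diagonal, ← diagonal_one]
  exact congrArg diagonal (funext fun i => inv_mul_cancel₀ (hd i))

theorem inv_diagonal_conj (hd : ∀ i, d i ≠ 0) (M : Matrix ι ι K) :
    (diagonal d⁻¹ * M * diagonal d)⁻¹ = diagonal d⁻¹ * M⁻¹ * diagonal d := by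
  have h := diagonal_inv_mul_diagonal hd
  rw [mul_inv_rev, mul_inv_rev, inv_eq_left_inv h, inv_eq_right_inv h, Matrix.mul_assoc]

end Matrix

theorem subdet_diagonal_mul_mul_diagonal {α : Type*} [CommRing α] {n : ℕ}
    (M : Matrix (Fin n) (Fin n) α) (u v : Fin n → α) (I J : Finset (Fin n)) :
    subdet (diagonal u * M * diagonal v) I J = (∏ i ∈ I, u i) * (∏ j ∈ J, v j) * subdet M I J := by
  unfold subdet
  split_ifs with hIJ
  · set r := fun p : Fin I.card => ((I.orderIsoOfFin rfl) p : Fin n)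
    set c := fun p : Fin I.card => ((J.orderIsoOfFin hIJ.symm) p : Fin n)
    have hsub : (diagonal u * M * diagonal v).submatrix r c =
        diagonal (u ∘ r) * M.submatrix r c * diagonal (v ∘ c) := by
      ext p q
      simp [mul_diagonal, diagonal_mul]
    have hr : ∏ p, (u ∘ r) p = ∏ i ∈ I, u i :=
      (Fintype.prod_equiv (I.orderIsoOfFin rfl).toEquiv _ _ fun _ => rfl).trans
        (I.prod_coe_sort u)
    have hc : ∏ p, (v ∘ c) p = ∏ j ∈ J, v j :=
      (Fintype.prod_equiv (J.orderIsoOfFin hIJ.symm).toEquiv _ _ fun _ => rfl).trans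
        (J.prod_coe_sort v)
    rw [hsub, det_mul, det_mul, det_diagonal, det_diagonal, hr, hc]
    ring
  · rw [mul_zero]

theorem edgeMatrixR_rescale (n : ℕ) (D : Finset (Fin n × Fin n)) (a : {e // e ∈ D} → ℝ)
    (d : Fin n → ℝ) :
    edgeMatrixR n D (fun e => (d e.1.1)⁻¹ * a e * d e.1.2) =
      diagonal d⁻¹ * edgeMatrixR n D a * diagonal d := by
  ext i j
  simp only [edgeMatrixR, diagonal_mul, mul_diagonal, of_apply, Pi.inv_apply]
  split_ifs <;> ring

theorem sigmaOm_rescale (n : ℕ) (D : Finset (Fin n × Fin n)) (a : {e // e ∈ D} → ℝ)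
    (ω d : Fin n → ℝ) (hd : ∀ m, d m ≠ 0) :
    sigmaOm n D (fun e => (d e.1.1)⁻¹ * a e * d e.1.2) (fun m => d m ^ 2 * ω m) =
      diagonal d * sigmaOm n D a ω * diagonal d := by
  have hone : 1 - edgeMatrixR n D (fun e => (d e.1.1)⁻¹ * a e * d e.1.2) =
      diagonal d⁻¹ * (1 - edgeMatrixR n D a) * diagonal d := by
    rw [edgeMatrixR_rescale, Matrix.mul_sub, Matrix.sub_mul, Matrix.mul_one,
      diagonal_inv_mul_diagonal hd]
  have hdiag : diagonal d⁻¹ * diagonal (fun m => d m ^ 2 * ω m) * diagonal d⁻¹ = diagonal ω := by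
    rw [diagonal_mul_diagonal, diagonal_mul_diagonal]
    congr 1
    funext m
    rw [Pi.inv_apply]
    field_simp [hd m]
  rw [sigmaOm, sigmaOm, ← transpose_nonsing_inv, ← transpose_nonsing_inv, hone,
    inv_diagonal_conj hd, transpose_mul, transpose_mul, diagonal_transpose, diagonal_transpose,
    ← hdiag]
  simp only [Matrix.mul_assoc]

theorem statement4_general (n : ℕ) (D : Finset (Fin n × Fin n))
    (I J : Finset (Fin n))
    (a : {e // e ∈ D} → ℝ) (ω d : Fin n → ℝ) (hd : ∀ m, 0 < d m) :
    subdet (sigmaOm n D (fun e => (d e.1.1)⁻¹ * a e * d e.1.2) (fun m => d m ^ 2 * ω m)) I J =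
      (∏ i ∈ I, d i) * (∏ j ∈ J, d j) * subdet (sigmaOm n D a ω) I J := by
  rw [sigmaOm_rescale n D a ω d fun m => (hd m).ne', subdet_diagonal_mul_mul_diagonal]

/-- Rescaling by `d` scales `det Σ_Ω[I,J]` by `(∏_{i ∈ I} d_i) · (∏_{j ∈ J} d_j)`. -/
theorem statement4 (n : ℕ) (D : Finset (Fin n × Fin n)) (hD : ∀ e ∈ D, e.1 < e.2)
    (I J : Finset (Fin n)) (hIJ : I.card = J.card)
    (a : {e // e ∈ D} → ℝ) (ω d : Fin n → ℝ) (hω : ∀ m, 0 < ω m) (hd : ∀ m, 0 < d m) :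
    subdet (sigmaOm n D (fun e => (d e.1.1)⁻¹ * a e * d e.1.2) (fun m => d m ^ 2 * ω m)) I J =
      (∏ i ∈ I, d i) * (∏ j ∈ J, d j) * subdet (sigmaOm n D a ω) I J :=
  statement4_general n D I J a ω d hd

end
end

section
/- Suppose D contains no edge whose source lies in S, and let s ∈ S with (i0,s) ∈ D. Then the variable X_{(i0,s)} appears at most linearly in f (its degree in f is at most 1), the formal partial derivative ∂f/∂X_{(i0,s)} equals ε · det Σ[S ∪ {i0}, (S \ {s}) ∪ {j0, i0}] for some sign ε ∈ {1, −1}, and consequently det Σ[S ∪ {i0}, (S \ {s}) ∪ {j0, i0}] lies in the ideal of R generated by the partial derivatives {∂f/∂X_e : e ∈ D}. -/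
open MvPolynomial Matrix

noncomputable section

/-- The matrix of variables of the DAG with edge set `D`. -/
def edgeMatrix (n : ℕ) (D : Finset (Fin n × Fin n)) :
    Matrix (Fin n) (Fin n) (MvPolynomial {e // e ∈ D} ℝ) :=
  Matrix.of fun i j => if h : (i, j) ∈ D then X ⟨(i, j), h⟩ else 0

/-- `Σ = (I - A)⁻ᵀ (I - A)⁻¹` over the polynomial ring. -/
def sigmaMat (n : ℕ) (D : Finset (Fin n × Fin n)) :
    Matrix (Fin n) (Fin n) (MvPolynomial {e // e ∈ D} ℝ) :=
  ((1 - edgeMatrix n D)ᵀ)⁻¹ * (1 - edgeMatrix n D)⁻¹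

/-- `f = det Σ[S ∪ {i0}, S ∪ {j0}]`. -/
def fpoly (n : ℕ) (D : Finset (Fin n × Fin n)) (i0 j0 : Fin n) (S : Finset (Fin n)) :
    MvPolynomial {e // e ∈ D} ℝ :=
  subdet (sigmaMat n D) (insert i0 S) (insert j0 S)

/-- `t` is below `v`: there is a directed path of length ≥ 1 from `v` to `t`. -/
def Below {n : ℕ} (D : Finset (Fin n × Fin n)) (v t : Fin n) : Prop :=
  Relation.TransGen (fun i j => (i, j) ∈ D) v t

end

/-!
Write `A` for the edge matrix, `B = (1 - A)⁻¹` and `x = X_{(i0,s)}`, so `Σ = Bᵀ B` and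
`∂A/∂x = E_{i0 s}`. Since no edge leaves `s`, row `s` of `B` is the unit vector `e_s`, hence
`∂B/∂x = B E_{i0 s} B = B E_{i0 s}` and `∂Σ/∂x = E_{s i0} Σ + Σ E_{i0 s}`: differentiating `Σ`
only replaces row `s` by row `i0` and column `s` by column `i0`. In `det Σ[S ∪ {i0}, S ∪ {j0}]`
the row replacement repeats the row `i0` and contributes nothing, while the column replacement
(Cramer's rule) yields `± det Σ[S ∪ {i0}, (S \ {s}) ∪ {j0, i0}]`. That minor has no column `s`,
so differentiating it once more gives `0`, i.e. `f` is affine in `x`.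
-/

theorem Function.Injective.update_of_notMem_range {α β : Type*} [DecidableEq α] {f : α → β}
    (hf : Function.Injective f) (a : α) {b : β} (hb : b ∉ Set.range f) :
    Function.Injective (Function.update f a b) := by
  intro x y hxy
  by_cases hx : x = a <;> by_cases hy : y = a
  · rw [hx, hy]
  · simp only [hx, Function.update_self, Function.update_of_ne hy] at hxy
    exact absurd ⟨y, hxy.symm⟩ hb
  · simp only [hy, Function.update_self, Function.update_of_ne hx] at hxy
    exact absurd ⟨x, hxy⟩ hb
  · exact hf (by simpa only [Function.update_of_ne hx, Function.update_of_ne hy] using hxy)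

theorem MvPolynomial.degreeOf_le_one_of_pderiv_pderiv_eq_zero {R σ : Type*} [CommSemiring R]
    [NoZeroDivisors R] [CharZero R] {i : σ} {p : MvPolynomial σ R}
    (h : pderiv i (pderiv i p) = 0) : degreeOf i p ≤ 1 := by
  classical
  refine degreeOf_le_iff.mpr fun m hm => ?_
  by_contra! hmi
  have hle : Finsupp.single i 1 + Finsupp.single i 1 ≤ m := by
    rw [← Finsupp.single_add, Finsupp.single_le_iff]; omega
  have hcoeff := congrArg (coeff (m - (Finsupp.single i 1 + Finsupp.single i 1))) h
  rw [coeff_pderiv, coeff_pderiv, add_assoc, tsub_add_cancel_of_le hle, coeff_zero] at hcoeff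
  simp only [mul_eq_zero, Nat.cast_add_one_ne_zero, or_false] at hcoeff
  exact (mem_support_iff.mp hm) hcoeff

theorem Finset.exists_orderIsoOfFin_eq {α : Type*} [LinearOrder α] {m : ℕ} {I : Finset α}
    (h : I.card = m) {k : α} (hk : k ∈ I) : ∃ p, (I.orderIsoOfFin h p : α) = k :=
  ⟨_, congrArg Subtype.val ((I.orderIsoOfFin h).apply_symm_apply ⟨k, hk⟩)⟩

theorem exists_det_submatrix_eq_units_smul_subdet {α : Type*} [CommRing α] {n : ℕ}
    (M : Matrix (Fin n) (Fin n) α) (I J : Finset (Fin n)) (hIJ : I.card = J.card)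
    (g : Fin I.card → Fin n) (hg : Function.Injective g) (hgJ : ∀ q, g q ∈ J) :
    ∃ ε : ℤˣ,
      (M.submatrix (fun p => (I.orderIsoOfFin rfl p : Fin n)) g).det = ε • subdet M I J := by
  set e := J.orderIsoOfFin hIJ.symm
  have hinj : Function.Injective fun q => e.symm ⟨g q, hgJ q⟩ :=
    fun a b hab => hg (by simpa using congrArg (fun z => (e z : Fin n)) hab)
  set σ := Equiv.ofBijective _ (Finite.injective_iff_bijective.mp hinj)
  refine ⟨Equiv.Perm.sign σ, ?_⟩
  have hperm : M.submatrix (fun p => (I.orderIsoOfFin rfl p : Fin n)) g =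
      (M.submatrix (fun p => (I.orderIsoOfFin rfl p : Fin n)) fun q => (e q : Fin n)).submatrix
        id σ := by
    ext p q
    simp [σ]
  rw [hperm, det_permute', subdet, dif_pos hIJ, Units.smul_def, zsmul_eq_mul]

namespace Derivation

section
variable {R A M : Type*} [CommSemiring R] [CommSemiring A] [Algebra R A] [AddCommMonoid M]
  [Module A M] [Module R M]

theorem leibniz_finset_prod {ι : Type*} [DecidableEq ι] (D : Derivation R A M) (t : Finset ι)
    (f : ι → A) : D (∏ i ∈ t, f i) = ∑ i ∈ t, (∏ j ∈ t.erase i, f j) • D (f i) := by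
  induction t using Finset.induction_on with
  | empty => simp
  | insert a t ha ih =>
    rw [Finset.prod_insert ha, leibniz, ih, Finset.sum_insert ha, Finset.erase_insert ha,
      Finset.smul_sum, add_comm]
    congr 1
    refine Finset.sum_congr rfl fun i hi => ?_
    rw [Finset.erase_insert_of_ne (ne_of_mem_of_not_mem hi ha).symm,
      Finset.prod_insert fun h => ha (Finset.mem_of_mem_erase h), smul_smul]

end

variable {R A : Type*} [CommSemiring R] [CommRing A] [Algebra R A] (D : Derivation R A A)

theorem map_det {n : Type*} [DecidableEq n] [Fintype n] (M : Matrix n n A) :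
    D M.det = ∑ p, (M.updateRow p (M.map D p)).det := by
  have hterm : ∀ (σ : Equiv.Perm n) (k : n), ∏ i, M.updateRow (σ k) (M.map D (σ k)) (σ i) i =
      (∏ j ∈ Finset.univ.erase k, M (σ j) j) * D (M (σ k) k) := by
    intro σ k
    rw [← Finset.mul_prod_erase _ _ (Finset.mem_univ k), updateRow_self, mul_comm]
    congr 1
    refine Finset.prod_congr rfl fun i hi => ?_
    rw [updateRow_ne fun h => (Finset.ne_of_mem_erase hi) (σ.injective h)]
  calc D M.det = ∑ σ : Equiv.Perm n, Equiv.Perm.sign σ •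
        ∑ k, (∏ j ∈ Finset.univ.erase k, M (σ j) j) * D (M (σ k) k) := by
        simp only [det_apply, map_sum, map_zsmul_unit, leibniz_finset_prod, smul_eq_mul]
    _ = ∑ σ : Equiv.Perm n, ∑ p, Equiv.Perm.sign σ •
        ∏ i, M.updateRow p (M.map D p) (σ i) i := by
        refine Finset.sum_congr rfl fun σ _ => ?_
        rw [Finset.smul_sum, ← Equiv.sum_comp σ fun p =>
          Equiv.Perm.sign σ • ∏ i, M.updateRow p (M.map D p) (σ i) i]
        simp only [hterm]
    _ = _ := by
        rw [Finset.sum_comm]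
        simp only [det_apply]

theorem matrix_map_mul {l m n : Type*} [Fintype m] (M : Matrix l m A) (N : Matrix m n A) :
    (M * N).map D = M.map D * N + M * N.map D := by
  ext i j
  simp only [map_apply, mul_apply, Matrix.add_apply, map_sum, leibniz, smul_eq_mul,
    Finset.sum_add_distrib]
  rw [add_comm]
  congr 1; simp only [mul_comm]

theorem matrix_map_one {n : Type*} [DecidableEq n] : (1 : Matrix n n A).map D = 0 := by
  ext i j
  by_cases h : i = j <;> simp [h]

theorem matrix_map_nonsing_inv {n : Type*} [DecidableEq n] [Fintype n] (M : Matrix n n A)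
    (h : IsUnit M.det) : M⁻¹.map D = -(M⁻¹ * M.map D * M⁻¹) := by
  have h0 : M.map D * M⁻¹ + M * M⁻¹.map D = 0 := by
    rw [← matrix_map_mul, mul_nonsing_inv _ h, matrix_map_one]
  calc M⁻¹.map D = M⁻¹ * (M * M⁻¹.map D) := by
        rw [← Matrix.mul_assoc, nonsing_inv_mul _ h, Matrix.one_mul]
    _ = -(M⁻¹ * M.map D * M⁻¹) := by
      rw [eq_neg_of_add_eq_zero_right h0, Matrix.mul_neg, Matrix.mul_assoc]

section Submatrix

variable {κ ι : Type*} [Fintype κ] [DecidableEq κ] [Fintype ι] [DecidableEq ι]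
  {M : Matrix κ κ A} {s k : κ} {r c : ι → κ}

theorem map_det_submatrix_eq_sum (hM : M.map D = single s k (1 : A) * M + M * single k s 1)
    (hk : ∃ p, r p = k) (hsk : s ≠ k) :
    D (M.submatrix r c).det = ∑ p, ((M.submatrix r c).updateRow p
      fun q => if c q = s then M (r p) k else 0).det := by
  have hentry : ∀ i j,
      D (M i j) = (if i = s then M k j else 0) + (if j = s then M i k else 0) := by
    intro i j
    rw [← map_apply (f := D), hM, Matrix.add_apply]
    congr 1
    · split_ifs with h
      · rw [h, single_mul_apply_same, one_mul]
      · exact single_mul_apply_of_ne _ _ _ _ _ h _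
    · split_ifs with h
      · rw [h, mul_single_apply_same, mul_one]
      · exact mul_single_apply_of_ne _ _ _ _ _ h _
  obtain ⟨pk, hpk⟩ := hk
  rw [map_det]
  refine Finset.sum_congr rfl fun p _ => ?_
  have hrow : (M.submatrix r c).map D p = (fun q => if r p = s then M k (c q) else 0) +
      fun q => if c q = s then M (r p) k else 0 := funext fun q => hentry _ _
  rw [hrow, det_updateRow_add, add_eq_right]
  -- differentiating the row `s` produces the row `k`, which is already present
  by_cases hp : r p = s
  · have hne : p ≠ pk := fun h => hsk (by rw [← hp, h, hpk])
    refine det_zero_of_row_eq hne ?_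
    rw [updateRow_self, updateRow_ne hne.symm]
    ext q
    simp [hp, hpk]
  · exact det_eq_zero_of_row_eq_zero p fun q => by simp [hp]

theorem map_det_submatrix_eq_zero (hM : M.map D = single s k (1 : A) * M + M * single k s 1)
    (hk : ∃ p, r p = k) (hsk : s ≠ k) (hc : ∀ q, c q ≠ s) : D (M.submatrix r c).det = 0 := by
  rw [map_det_submatrix_eq_sum D hM hk hsk]
  exact Finset.sum_eq_zero fun p _ => det_eq_zero_of_row_eq_zero p fun q => by simp [hc]

theorem map_det_submatrix_eq_det_update
    (hM : M.map D = single s k (1 : A) * M + M * single k s 1)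
    (hk : ∃ p, r p = k) (hsk : s ≠ k) (hc : Function.Injective c) {qs : ι} (hqs : c qs = s) :
    D (M.submatrix r c).det = (M.submatrix r (Function.update c qs k)).det := by
  set N := M.submatrix r c
  set b : ι → A := fun p => M (r p) k
  have hrow : ∀ p, (fun q => if c q = s then M (r p) k else 0) = b p • Pi.single qs 1 := by
    intro p
    ext q
    by_cases hq : q = qs
    · simp [hq, hqs, b]
    · have hcq : c q ≠ s := fun h => hq (hc (h.trans hqs.symm))
      simp [hq, hcq]
  have hcol : N.updateCol qs b = M.submatrix r (Function.update c qs k) := by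
    ext p q
    by_cases hq : q = qs <;> simp [hq, N, b]
  calc D N.det = ∑ p, b p * (N.updateRow p (Pi.single qs 1)).det := by
        rw [map_det_submatrix_eq_sum D hM hk hsk]
        simp only [N, hrow, det_updateRow_smul]
    _ = (N.adjugate *ᵥ b) qs := by
        simp only [mulVec, dotProduct, adjugate_apply, mul_comm]
    _ = _ := by rw [← cramer_eq_adjugate_mulVec, cramer_apply, hcol]

end Submatrix

section Subdet

variable {n : ℕ} {M : Matrix (Fin n) (Fin n) A} {s k : Fin n} {I J : Finset (Fin n)}

theorem map_subdet_eq_zero (hM : M.map D = single s k (1 : A) * M + M * single k s 1)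
    (hk : k ∈ I) (hsk : s ≠ k) (hs : s ∉ J) : D (subdet M I J) = 0 := by
  unfold subdet
  split_ifs with hIJ
  · exact map_det_submatrix_eq_zero D hM (Finset.exists_orderIsoOfFin_eq rfl hk) hsk
      fun q h => hs (h ▸ (J.orderIsoOfFin hIJ.symm q).2)
  · exact D.map_zero

theorem exists_map_subdet_eq_units_smul
    (hM : M.map D = single s k (1 : A) * M + M * single k s 1) (hk : k ∈ I) (hsk : s ≠ k)
    (hs : s ∈ J) (hkJ : k ∉ J) (hIJ : I.card = J.card) :
    ∃ ε : ℤˣ, D (subdet M I J) = ε • subdet M I (insert k (J.erase s)) := by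
  set c : Fin I.card → Fin n := fun q => (J.orderIsoOfFin hIJ.symm q : Fin n)
  have hc : Function.Injective c := fun a b h =>
    (J.orderIsoOfFin hIJ.symm).injective (Subtype.ext h)
  have hcJ : ∀ q, c q ∈ J := fun q => (J.orderIsoOfFin hIJ.symm q).2
  obtain ⟨qs, hqs⟩ := Finset.exists_orderIsoOfFin_eq hIJ.symm hs
  have hcard : I.card = (insert k (J.erase s)).card := by
    have := Finset.card_pos.mpr ⟨s, hs⟩
    rw [Finset.card_insert_of_notMem fun h => hkJ (Finset.mem_of_mem_erase h),
      Finset.card_erase_of_mem hs, hIJ]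
    omega
  have hmem : ∀ q, Function.update c qs k q ∈ insert k (J.erase s) := by
    intro q
    by_cases hq : q = qs
    · simp [hq]
    · rw [Function.update_of_ne hq]
      exact Finset.mem_insert_of_mem
        (Finset.mem_erase.mpr ⟨fun h => hq (hc (h.trans hqs.symm)), hcJ q⟩)
  obtain ⟨ε, hε⟩ := exists_det_submatrix_eq_units_smul_subdet M I _ hcard _
    (hc.update_of_notMem_range qs fun ⟨q, hq⟩ => hkJ (hq ▸ hcJ q)) hmem
  refine ⟨ε, ?_⟩
  rw [subdet, dif_pos hIJ,
    map_det_submatrix_eq_det_update D hM (Finset.exists_orderIsoOfFin_eq rfl hk) hsk hc hqs, hε]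

end Subdet

end Derivation

section EdgeMatrix

variable {n : ℕ} {D : Finset (Fin n × Fin n)}

theorem edgeMatrix_apply_of_notMem {i j : Fin n} (h : (i, j) ∉ D) : edgeMatrix n D i j = 0 :=
  dif_neg h

theorem det_one_sub_edgeMatrix (hD : ∀ e ∈ D, e.1 < e.2) : (1 - edgeMatrix n D).det = 1 := by
  have hA : ∀ i j, ¬ i < j → edgeMatrix n D i j = 0 :=
    fun i j hij => edgeMatrix_apply_of_notMem fun h => hij (hD _ h)
  rw [det_of_isUpperTriangular]
  · exact Finset.prod_eq_one fun i _ => by simp [hA i i (lt_irrefl i)]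
  · intro i j hji
    have hij : i ≠ j := (ne_of_lt hji).symm
    simp [hA i j (lt_asymm hji), hij]

theorem edgeMatrix_map_pderiv {i j : Fin n} (h : (i, j) ∈ D) :
    (edgeMatrix n D).map (pderiv ⟨(i, j), h⟩) = single i j 1 := by
  refine Matrix.ext fun a b => ?_
  simp only [map_apply, edgeMatrix, of_apply, single_apply]
  split_ifs with hab hij hij
  · obtain ⟨rfl, rfl⟩ := hij
    exact pderiv_X_self _
  · exact pderiv_X_of_ne fun he => hij (by simpa using (congrArg Subtype.val he).symm)
  · exact absurd (hij.1 ▸ hij.2 ▸ h) hab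
  · exact map_zero _

theorem single_mul_inv_one_sub_edgeMatrix (hD : ∀ e ∈ D, e.1 < e.2) {s : Fin n}
    (hs : ∀ e ∈ D, e.1 ≠ s) (i : Fin n) :
    single i s (1 : MvPolynomial {e // e ∈ D} ℝ) * (1 - edgeMatrix n D)⁻¹ = single i s 1 := by
  have hrow : single i s (1 : MvPolynomial {e // e ∈ D} ℝ) * (1 - edgeMatrix n D) =
      single i s 1 := by
    refine Matrix.ext fun a b => ?_
    by_cases ha : a = i
    · rw [ha, single_mul_apply_same, one_mul, Matrix.sub_apply,
        edgeMatrix_apply_of_notMem fun h => hs _ h rfl, sub_zero]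
      by_cases hb : s = b
      · subst hb
        simp
      · simp [hb]
    · rw [single_mul_apply_of_ne _ _ _ _ _ ha, single_apply, if_neg fun h => ha h.1.symm]
  have hu : IsUnit (1 - edgeMatrix n D).det := by rw [det_one_sub_edgeMatrix hD]; exact isUnit_one
  conv_lhs => rw [← hrow]
  rw [Matrix.mul_assoc, mul_nonsing_inv _ hu, Matrix.mul_one]

theorem sigmaMat_map_pderiv (hD : ∀ e ∈ D, e.1 < e.2) {i s : Fin n} (hs : ∀ e ∈ D, e.1 ≠ s)
    (h : (i, s) ∈ D) :
    (sigmaMat n D).map (pderiv ⟨(i, s), h⟩) =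
      single s i 1 * sigmaMat n D + sigmaMat n D * single i s 1 := by
  have hu : IsUnit (1 - edgeMatrix n D).det := by rw [det_one_sub_edgeMatrix hD]; exact isUnit_one
  have hB : (1 - edgeMatrix n D)⁻¹.map (pderiv ⟨(i, s), h⟩) =
      (1 - edgeMatrix n D)⁻¹ * single i s 1 := by
    rw [Derivation.matrix_map_nonsing_inv _ _ hu, Matrix.map_sub _ (map_sub _),
      Derivation.matrix_map_one, edgeMatrix_map_pderiv, zero_sub, Matrix.mul_neg, Matrix.neg_mul,
      neg_neg, Matrix.mul_assoc, single_mul_inv_one_sub_edgeMatrix hD hs]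
  simp only [sigmaMat, ← transpose_nonsing_inv]
  rw [Derivation.matrix_map_mul, transpose_map, hB]
  simp only [transpose_mul, transpose_single, Matrix.mul_assoc]

end EdgeMatrix

/-- If no edge of `D` starts in `S`, `s ∈ S` and `i0 → s`, then `X_{(i0,s)}` appears at most
linearly in `f`, its partial derivative is `± det Σ[S ∪ {i0}, (S \ {s}) ∪ {j0, i0}]`, and this
determinant lies in the ideal generated by the partial derivatives of `f`. -/
theorem statement6 (n : ℕ) (D : Finset (Fin n × Fin n)) (hD : ∀ e ∈ D, e.1 < e.2)
    (i0 j0 : Fin n) (hne : i0 ≠ j0) (S : Finset (Fin n)) (hi0S : i0 ∉ S) (hj0S : j0 ∉ S)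
    (hout : ∀ e ∈ D, e.1 ∉ S) (s : Fin n) (hs : s ∈ S) (hi0s : (i0, s) ∈ D) :
    MvPolynomial.degreeOf (⟨(i0, s), hi0s⟩ : {e // e ∈ D}) (fpoly n D i0 j0 S) ≤ 1 ∧
    (∃ ε : ℝ, (ε = 1 ∨ ε = -1) ∧
      MvPolynomial.pderiv (⟨(i0, s), hi0s⟩ : {e // e ∈ D}) (fpoly n D i0 j0 S) =
        MvPolynomial.C ε * subdet (sigmaMat n D) (insert i0 S) (insert j0 (insert i0 (S.erase s)))) ∧
    subdet (sigmaMat n D) (insert i0 S) (insert j0 (insert i0 (S.erase s))) ∈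
      Ideal.span (Set.range fun e : {e // e ∈ D} => MvPolynomial.pderiv e (fpoly n D i0 j0 S)) := by
  set x : {e // e ∈ D} := ⟨(i0, s), hi0s⟩
  have hsigma := sigmaMat_map_pderiv hD (fun e he h => hout e he (h ▸ hs)) hi0s
  have hsi0 : s ≠ i0 := fun h => hi0S (h ▸ hs)
  have hsj0 : s ≠ j0 := fun h => hj0S (h ▸ hs)
  have hJ : insert i0 ((insert j0 S).erase s) = insert j0 (insert i0 (S.erase s)) := by
    rw [Finset.erase_insert_of_ne hsj0.symm, Finset.insert_comm]
  obtain ⟨ε, hε⟩ := Derivation.exists_map_subdet_eq_units_smul _ hsigma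
    (I := insert i0 S) (J := insert j0 S) (Finset.mem_insert_self i0 S) hsi0
    (Finset.mem_insert_of_mem hs) (by simp [hne, hi0S])
    (by rw [Finset.card_insert_of_notMem hi0S, Finset.card_insert_of_notMem hj0S])
  rw [hJ] at hε
  have hzero := Derivation.map_subdet_eq_zero _ hsigma (I := insert i0 S)
    (J := insert j0 (insert i0 (S.erase s))) (Finset.mem_insert_self i0 S) hsi0
    (by simp [hsj0, hsi0])
  refine ⟨degreeOf_le_one_of_pderiv_pderiv_eq_zero ?_, ⟨(ε : ℤ), ?_, ?_⟩, ?_⟩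
  · rw [fpoly, hε, Derivation.map_smul_of_tower, hzero, smul_zero]
  · rcases Int.units_eq_one_or ε with h | h <;> simp [h]
  · rw [fpoly, hε, map_intCast, Units.smul_def, zsmul_eq_mul]
  · rw [← one_smul ℤˣ (subdet _ _ _), ← Int.units_mul_self ε, mul_smul, ← hε, Units.smul_def]
    exact zsmul_mem (Ideal.subset_span (Set.mem_range_self x)) _
end
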